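/- Let x_1 ≤ x_2 ≤ … ≤ x_n be real numbers and k ≥ 1. The optimal 1D k-Means cost equals the optimal cost over interval partitions: min over all sets M = {μ_1, …, μ_k} ⊂ ℝ of at most k centroids of ∑_{ℓ=1}^{n} min_{μ ∈ M} (x_ℓ − μ)² equals the minimum over all partitions of {1, …, n} into at most k consecutive intervals of the sum of the squared-distance cluster costs CC of the intervals. -/

import Mathlib

/-!
For sorted data every nearest-centroid map `y ↦ g y` is monotone: the difference of the squared
distances to two centroids is an affine function of the point, increasing towards the larger
centroid. Its fibres are therefore consecutive intervals, and charging each interval its own mean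
instead of its centroid can only lower the cost. Conversely, the means of the intervals of a
partition are at most `k` centroids, and each point is at least as close to the nearest of them
as to the mean of its own interval.
-/

/-- The squared-distance cluster cost of grouping `x_i, …, x_j` into one cluster
with the optimal centroid (the arithmetic mean); `0` when `i > j`. -/
noncomputable def clusterCost (x : ℕ → ℝ) (i j : ℕ) : ℝ :=
  ∑ ℓ ∈ Finset.Icc i j,
    (x ℓ - (∑ t ∈ Finset.Icc i j, x t) / ((Finset.Icc i j).card : ℝ)) ^ 2

/-- `kCost x k m` is the minimum cost of partitioning `x_1, …, x_m` into at most
`k` consecutive groups, each charged its squared-distance cluster cost. -/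
noncomputable def kCost (x : ℕ → ℝ) (k m : ℕ) : ℝ :=
  sInf { c : ℝ | ∃ b : ℕ → ℕ, Monotone b ∧ b 0 = 0 ∧ b k = m ∧
    c = ∑ t ∈ Finset.range k, clusterCost x (b t + 1) (b (t + 1)) }

open Finset

theorem sum_sq_sub_mean_le {ι : Type*} (s : Finset ι) (x : ι → ℝ) (c : ℝ) :
    ∑ i ∈ s, (x i - (∑ j ∈ s, x j) / #s) ^ 2 ≤ ∑ i ∈ s, (x i - c) ^ 2 := by
  rcases s.eq_empty_or_nonempty with rfl | hs
  · simp
  set μ := (∑ j ∈ s, x j) / #s with hμ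
  have hcentered : ∑ i ∈ s, (x i - μ) = 0 := by
    rw [hμ, sum_sub_distrib, sum_const, nsmul_eq_mul, mul_div_cancel₀ _ (by positivity), sub_self]
  calc ∑ i ∈ s, (x i - μ) ^ 2
      ≤ ∑ i ∈ s, (x i - μ) ^ 2 + 2 * (μ - c) * ∑ i ∈ s, (x i - μ) + #s * (μ - c) ^ 2 := by
        rw [hcentered]; nlinarith [sq_nonneg (μ - c)]
    _ = ∑ i ∈ s, (x i - c) ^ 2 := by
        rw [mul_sum, ← nsmul_eq_mul, ← sum_const, ← sum_add_distrib, ← sum_add_distrib]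
        exact sum_congr rfl fun i _ => by ring

theorem clusterCost_le (x : ℕ → ℝ) (i j : ℕ) (c : ℝ) :
    clusterCost x i j ≤ ∑ ℓ ∈ Icc i j, (x ℓ - c) ^ 2 :=
  sum_sq_sub_mean_le _ _ _

theorem clusterCost_nonneg (x : ℕ → ℝ) (i j : ℕ) : 0 ≤ clusterCost x i j :=
  sum_nonneg fun _ _ => sq_nonneg _

theorem sum_range_sum_Ioc {M : Type*} [AddCommMonoid M] {b : ℕ → ℕ} (hb : Monotone b)
    (f : ℕ → M) (k : ℕ) :
    ∑ t ∈ range k, ∑ ℓ ∈ Ioc (b t) (b (t + 1)), f ℓ = ∑ ℓ ∈ Ioc (b 0) (b k), f ℓ := by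
  induction k with
  | zero => simp
  | succ k ih =>
    rw [sum_range_succ, ih, sum_Ioc_consecutive _ (hb k.zero_le) (hb k.le_succ)]

theorem monotone_of_forall_sq_sub_le {ι : Type*} [LinearOrder ι] {μ : ι → ℝ} (hμ : StrictMono μ)
    {g : ℝ → ι} (hg : ∀ y i, (y - μ (g y)) ^ 2 ≤ (y - μ i) ^ 2) : Monotone g := by
  intro y z hyz
  by_contra! hgzy
  have hlt : y < z := hyz.lt_of_ne (by rintro rfl; exact lt_irrefl _ hgzy)
  have hy := hg y (g z)
  have hz := hg z (g y)
  nlinarith [mul_pos (sub_pos.2 hlt) (sub_pos.2 (hμ hgzy))]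

theorem exists_boundaries_of_monotoneOn {n k : ℕ} {a : ℕ → ℕ} (ha : MonotoneOn a (Set.Icc 1 n))
    (hak : ∀ ℓ ∈ Icc 1 n, a ℓ < k) :
    ∃ b : ℕ → ℕ, Monotone b ∧ b 0 = 0 ∧ b k = n ∧ ∀ t, ∀ ℓ ∈ Ioc (b t) (b (t + 1)), a ℓ = t := by
  set b : ℕ → ℕ := fun t => ((Icc 1 n).filter (a · < t)).sup id
  have hb_le (t : ℕ) : b t ≤ n := Finset.sup_le fun ℓ hℓ => (mem_Icc.1 (mem_filter.1 hℓ).1).2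
  have hle_iff (t : ℕ) {ℓ : ℕ} (hℓ : ℓ ∈ Icc 1 n) : ℓ ≤ b t ↔ a ℓ < t := by
    refine ⟨fun hℓt => ?_, fun hat => le_sup (f := id) (mem_filter.2 ⟨hℓ, hat⟩)⟩
    have hne : ((Icc 1 n).filter (a · < t)).Nonempty := by
      by_contra hempty
      rw [not_nonempty_iff_eq_empty] at hempty
      simp only [b, hempty, sup_empty, bot_eq_zero'] at hℓt
      exact absurd (mem_Icc.1 hℓ).1 (by omega)
    obtain ⟨m, hm, hbm⟩ := exists_mem_eq_sup _ hne id
    rw [mem_filter] at hm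
    exact (ha (mem_Icc.1 hℓ) (mem_Icc.1 hm.1) (hℓt.trans_eq hbm)).trans_lt hm.2
  refine ⟨b, fun s t hst => sup_mono fun ℓ hℓ => by
      rw [mem_filter] at hℓ ⊢; exact ⟨hℓ.1, hℓ.2.trans_le hst⟩,
    by simp [b], (hb_le k).antisymm ?_, fun t ℓ hℓ => ?_⟩
  · rcases n.eq_zero_or_pos with hn | hn
    · omega
    · exact (hle_iff k (right_mem_Icc.2 hn)).2 (hak n (right_mem_Icc.2 hn))
  · rw [mem_Ioc] at hℓ
    have hℓn : ℓ ∈ Icc 1 n := mem_Icc.2 ⟨by omega, hℓ.2.trans (hb_le _)⟩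
    have h₁ := (hle_iff t hℓn).not.1 hℓ.1.not_ge
    have h₂ := (hle_iff (t + 1) hℓn).1 hℓ.2
    omega

theorem exists_partition_cost_le (x : ℕ → ℝ) {n k : ℕ} {a : ℕ → ℕ}
    (ha : MonotoneOn a (Set.Icc 1 n)) (hak : ∀ ℓ ∈ Icc 1 n, a ℓ < k) (c : ℕ → ℝ) :
    ∃ b : ℕ → ℕ, Monotone b ∧ b 0 = 0 ∧ b k = n ∧
      ∑ t ∈ range k, clusterCost x (b t + 1) (b (t + 1)) ≤ ∑ ℓ ∈ Icc 1 n, (x ℓ - c (a ℓ)) ^ 2 := by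
  obtain ⟨b, hb, hb0, hbk, hfibre⟩ := exists_boundaries_of_monotoneOn ha hak
  refine ⟨b, hb, hb0, hbk, ?_⟩
  calc ∑ t ∈ range k, clusterCost x (b t + 1) (b (t + 1))
      ≤ ∑ t ∈ range k, ∑ ℓ ∈ Ioc (b t) (b (t + 1)), (x ℓ - c (a ℓ)) ^ 2 := by
        refine sum_le_sum fun t _ => (clusterCost_le x _ _ (c t)).trans_eq ?_
        rw [Icc_add_one_left_eq_Ioc]
        exact sum_congr rfl fun ℓ hℓ => by rw [hfibre t ℓ hℓ]
    _ = ∑ ℓ ∈ Icc 1 n, (x ℓ - c (a ℓ)) ^ 2 := by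
        rw [sum_range_sum_Ioc hb, hb0, hbk, ← Icc_add_one_left_eq_Ioc]; rfl

noncomputable def kMeansCost (x : ℕ → ℝ) (n : ℕ) (M : Finset ℝ) : ℝ :=
  ∑ ℓ ∈ Icc 1 n, sInf ((fun μ => (x ℓ - μ) ^ 2) '' (M : Set ℝ))

theorem kMeansCost_nonneg (x : ℕ → ℝ) (n : ℕ) (M : Finset ℝ) : 0 ≤ kMeansCost x n M :=
  sum_nonneg fun _ _ => Real.sInf_nonneg (by rintro _ ⟨μ, -, rfl⟩; positivity)

theorem exists_kMeansCost_le_partition_cost (x : ℕ → ℝ) {n k : ℕ} (hk : 1 ≤ k) {b : ℕ → ℕ}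
    (hb : Monotone b) (hb0 : b 0 = 0) (hbk : b k = n) :
    ∃ M : Finset ℝ, M.Nonempty ∧ #M ≤ k ∧
      kMeansCost x n M ≤ ∑ t ∈ range k, clusterCost x (b t + 1) (b (t + 1)) := by
  set mean : ℕ → ℝ := fun t =>
    (∑ s ∈ Icc (b t + 1) (b (t + 1)), x s) / #(Icc (b t + 1) (b (t + 1)))
  refine ⟨(range k).image mean, (nonempty_range_iff.2 (by omega)).image _,
    card_image_le.trans (card_range k).le, ?_⟩
  calc kMeansCost x n ((range k).image mean)
      = ∑ t ∈ range k, ∑ ℓ ∈ Ioc (b t) (b (t + 1)),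
          sInf ((fun μ => (x ℓ - μ) ^ 2) '' ((range k).image mean : Set ℝ)) := by
        rw [sum_range_sum_Ioc hb, hb0, hbk, ← Icc_add_one_left_eq_Ioc]; rfl
    _ ≤ ∑ t ∈ range k, ∑ ℓ ∈ Ioc (b t) (b (t + 1)), (x ℓ - mean t) ^ 2 := by
        refine sum_le_sum fun t ht => sum_le_sum fun ℓ _ => csInf_le ?_ ?_
        · exact ⟨0, by rintro _ ⟨μ, -, rfl⟩; positivity⟩
        · exact ⟨mean t, mem_coe.2 (mem_image_of_mem _ ht), rfl⟩
    _ = ∑ t ∈ range k, clusterCost x (b t + 1) (b (t + 1)) := by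
        simp only [clusterCost, mean, Icc_add_one_left_eq_Ioc]

theorem exists_partition_cost_le_kMeansCost (x : ℕ → ℝ) {n k : ℕ}
    (hx : MonotoneOn x (Set.Icc 1 n)) {M : Finset ℝ} (hM : M.Nonempty) (hMk : #M ≤ k) :
    ∃ b : ℕ → ℕ, Monotone b ∧ b 0 = 0 ∧ b k = n ∧
      ∑ t ∈ range k, clusterCost x (b t + 1) (b (t + 1)) ≤ kMeansCost x n M := by
  set e := M.orderEmbOfFin rfl
  have : Nonempty (Fin #M) := ⟨⟨0, hM.card_pos⟩⟩
  choose g hg using fun y : ℝ => Finite.exists_min fun i => (y - e i) ^ 2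
  have hg_mono : Monotone g := monotone_of_forall_sq_sub_le e.strictMono hg
  obtain ⟨b, hb, hb0, hbk, hcost⟩ := exists_partition_cost_le x (a := fun ℓ => g (x ℓ))
    (fun p hp q hq hpq => hg_mono (hx hp hq hpq)) (fun ℓ _ => (g (x ℓ)).isLt.trans_le hMk)
    (fun t => if h : t < #M then e ⟨t, h⟩ else 0)
  refine ⟨b, hb, hb0, hbk, hcost.trans (sum_le_sum fun ℓ _ => ?_)⟩
  simp only [Fin.is_lt, dif_pos, Fin.eta]
  refine le_csInf ((coe_nonempty.2 hM).image _) ?_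
  rintro _ ⟨ν, hν, rfl⟩
  obtain ⟨i, rfl⟩ : ν ∈ Set.range e := by rwa [range_orderEmbOfFin]
  exact hg _ i

/-- For sorted reals `x_1 ≤ … ≤ x_n` and `k ≥ 1`, the optimal
1D `k`-Means cost — the infimum over all nonempty sets `M` of at most `k` real
centroids of `∑_{ℓ=1}^{n} min_{μ ∈ M} (x_ℓ − μ)²` — equals the minimum over all
partitions of `{1, …, n}` into at most `k` consecutive intervals of the sum of
the squared-distance cluster costs of the intervals. -/
theorem kmeans_eq_interval_partition (n k : ℕ) (x : ℕ → ℝ)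
    (hsort : ∀ ⦃p q : ℕ⦄, 1 ≤ p → p ≤ q → q ≤ n → x p ≤ x q)
    (hk : 1 ≤ k) :
    sInf { c : ℝ | ∃ M : Finset ℝ, M.Nonempty ∧ M.card ≤ k ∧
        c = ∑ ℓ ∈ Finset.Icc 1 n, sInf ((fun μ => (x ℓ - μ) ^ 2) '' (M : Set ℝ)) }
      = kCost x k n := by
  have hx : MonotoneOn x (Set.Icc 1 n) := fun p hp q hq hpq => hsort hp.1 hpq hq.2
  have hsingleton : ({0} : Finset ℝ).card ≤ k := by simpa using hk
  unfold kCost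
  apply le_antisymm
  · obtain ⟨b, hb, hb0, hbk, -⟩ :=
      exists_partition_cost_le_kMeansCost x hx (singleton_nonempty 0) hsingleton
    refine le_csInf ⟨_, b, hb, hb0, hbk, rfl⟩ ?_
    rintro _ ⟨b, hb, hb0, hbk, rfl⟩
    obtain ⟨M, hM, hMk, hle⟩ := exists_kMeansCost_le_partition_cost x hk hb hb0 hbk
    refine csInf_le_of_le ⟨0, ?_⟩ ⟨M, hM, hMk, rfl⟩ hle
    rintro _ ⟨M, -, -, rfl⟩
    exact kMeansCost_nonneg x n M
  · refine le_csInf ⟨_, {0}, singleton_nonempty 0, hsingleton, rfl⟩ ?_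
    rintro _ ⟨M, hM, hMk, rfl⟩
    obtain ⟨b, hb, hb0, hbk, hle⟩ := exists_partition_cost_le_kMeansCost x hx hM hMk
    refine csInf_le_of_le ⟨0, ?_⟩ ⟨b, hb, hb0, hbk, rfl⟩ hle
    rintro _ ⟨b, -, -, -, rfl⟩
    exact sum_nonneg fun _ _ => clusterCost_nonneg _ _ _
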